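/- Let V be a vertex set with |V| = n partitioned into ℓ ≥ 1 parts P₁, …, P_ℓ, let p, q ∈ [0,1], and let G be a random graph drawn from the stochastic block model with parameters (p, q) on this partition. Let w(u,v) ∈ [0,1] be symmetric propagation probabilities on pairs of vertices and p_m ∈ [0,1] an upper bound with w(u,v) ≤ p_m for all pairs. Then the expected worst-case discrepancy between the true one-round influence and its factored approximation over the parts satisfies E_G[ max_{S ⊆ V} | I_G(S) − Σ_{x=1}^ℓ I_G(S ∩ P_x) | ] ≤ q · n² · (1 − 1/ℓ) · p_m, where the expectation is over the randomness of the SBM graph G. -/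

import Mathlib

open MeasureTheory
open scoped Classical

/-- One-round expected influence of a seed set `S` in the vertex set `V` for a
simple graph `G`:
`I_G(S) = |S| + Σ_{v ∈ V∖S} (1 − ∏_{u ∈ S adjacent to v in G} (1 − w u v))`. -/
noncomputable def oneRoundInfluence {α : Type*} [DecidableEq α]
    (G : SimpleGraph α) (w : α → α → ℝ) (V S : Finset α) : ℝ :=
  (S.card : ℝ) +
    ∑ v ∈ V \ S, (1 - ∏ u ∈ S.filter (fun u => G.Adj u v), (1 - w u v))

/-! Write the influence as a sum over vertices of activation probabilities; the probability
that `v` escapes the seeds factors over the parts. For `v` in part `x₀`, the factored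
approximation differs from the true term only through the parts `x ≠ x₀`, and by the union
bound `1 - ∏ (1 - fᵢ) ≤ ∑ fᵢ` that discrepancy is at most the weight of the edges into `v`
from other parts. So the worst-case loss is at most `p_m` times the number of cross-part
edges, whose expectation is `q` times the number `n² - ∑ₓ |Pₓ|²` of cross-part ordered pairs,
and Cauchy–Schwarz gives `∑ₓ |Pₓ|² ≥ n² / ℓ`. -/

open Finset Function

theorem one_sub_prod_one_sub_le_sum {ι : Type*} {s : Finset ι} {f : ι → ℝ}
    (h0 : ∀ i ∈ s, 0 ≤ f i) (h1 : ∀ i ∈ s, f i ≤ 1) :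
    1 - ∏ i ∈ s, (1 - f i) ≤ ∑ i ∈ s, f i := by
  induction s using Finset.cons_induction with
  | empty => simp
  | cons a s ha ih =>
    simp only [forall_mem_cons] at h0 h1
    have hprod0 : 0 ≤ ∏ i ∈ s, (1 - f i) := prod_nonneg fun i hi => by linarith [h1.2 i hi]
    rw [prod_cons, sum_cons]
    have hprod1 : ∏ i ∈ s, (1 - f i) ≤ 1 :=
      prod_le_one (fun i hi => by linarith [h1.2 i hi]) fun i hi => by linarith [h0.2 i hi]
    nlinarith [ih h0.2 h1.2, mul_nonneg h0.1 (sub_nonneg.2 hprod1)]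

theorem abs_one_sub_prod_sub_sum_le {ι : Type*} [DecidableEq ι] {s : Finset ι} {b : ι → ℝ}
    {i₀ : ι} (hi₀ : i₀ ∈ s) (h0 : ∀ i ∈ s, 0 ≤ b i) (h1 : ∀ i ∈ s, b i ≤ 1) :
    |(1 - ∏ i ∈ s, b i) - ∑ i ∈ s, (1 - b i)| ≤ ∑ i ∈ s.erase i₀, (1 - b i) := by
  have hle : 1 - ∏ i ∈ s, b i ≤ ∑ i ∈ s, (1 - b i) := by
    simpa using one_sub_prod_one_sub_le_sum (f := fun i => 1 - b i)
      (fun i hi => sub_nonneg.2 (h1 i hi)) (fun i hi => by linarith [h0 i hi])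
  have hprod : ∏ i ∈ s, b i ≤ b i₀ := by
    rw [← mul_prod_erase s b hi₀]
    exact mul_le_of_le_one_right (h0 i₀ hi₀)
      (prod_le_one (fun i hi => h0 i (mem_of_mem_erase hi)) fun i hi => h1 i (mem_of_mem_erase hi))
  have hrest : 0 ≤ ∑ i ∈ s.erase i₀, (1 - b i) :=
    sum_nonneg fun i hi => sub_nonneg.2 (h1 i (mem_of_mem_erase hi))
  rw [← add_sum_erase s _ hi₀] at hle ⊢
  rw [abs_le]
  constructor <;> linarith

def crossPairs {α ι : Type*} [DecidableEq α] [Fintype ι] (V : Finset α) (P : ι → Finset α) :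
    Finset (α × α) :=
  (V ×ˢ V).filter fun e => ¬ ∃ x, e.1 ∈ P x ∧ e.2 ∈ P x

section Influence

variable {α ι : Type*} (G : SimpleGraph α) (w : α → α → ℝ)

noncomputable def notActivated (S : Finset α) (v : α) : ℝ :=
  ∏ u ∈ S.filter (fun u => G.Adj u v), (1 - w u v)

noncomputable def influenceAt [DecidableEq α] (S : Finset α) (v : α) : ℝ :=
  if v ∈ S then 1 else 1 - notActivated G w S v

variable {G w}

theorem notActivated_nonneg (hw1 : ∀ u v, w u v ≤ 1) (S : Finset α) (v : α) :
    0 ≤ notActivated G w S v :=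
  prod_nonneg fun u _ => sub_nonneg.2 (hw1 u v)

theorem notActivated_le_one (hw0 : ∀ u v, 0 ≤ w u v) (hw1 : ∀ u v, w u v ≤ 1)
    (S : Finset α) (v : α) : notActivated G w S v ≤ 1 :=
  prod_le_one (fun u _ => sub_nonneg.2 (hw1 u v)) fun u _ => by linarith [hw0 u v]

variable [DecidableEq α]

theorem oneRoundInfluence_eq_sum_influenceAt {V S : Finset α} (hS : S ⊆ V) :
    oneRoundInfluence G w V S = ∑ v ∈ V, influenceAt G w S v := by
  unfold influenceAt
  rw [sum_ite, filter_mem_eq_inter, inter_eq_right.2 hS, filter_not,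
    filter_mem_eq_inter, inter_eq_right.2 hS, sum_const, nsmul_one, oneRoundInfluence]
  rfl

variable [Fintype ι] {P : ι → Finset α}

theorem notActivated_eq_prod_inter (hP : Pairwise (Disjoint on P))
    {S : Finset α} (hS : S ⊆ univ.biUnion P) (v : α) :
    notActivated G w S v = ∏ x, notActivated G w (S ∩ P x) v := by
  conv_lhs => rw [← inter_eq_left.2 hS, inter_biUnion, notActivated, filter_biUnion]
  refine prod_biUnion fun x _ y _ hxy => ?_
  exact disjoint_filter_filter ((hP hxy).mono inter_subset_right inter_subset_right)

theorem abs_influenceAt_sub_sum_le [DecidableEq ι]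
    (hP : Pairwise (Disjoint on P)) (hw0 : ∀ u v, 0 ≤ w u v) (hw1 : ∀ u v, w u v ≤ 1)
    {S : Finset α} (hS : S ⊆ univ.biUnion P) {v : α} {x₀ : ι} (hv : v ∈ P x₀) :
    |influenceAt G w S v - ∑ x, influenceAt G w (S ∩ P x) v|
      ≤ ∑ x ∈ univ.erase x₀, (1 - notActivated G w (S ∩ P x) v) := by
  have hother : ∀ x ∈ univ.erase x₀,
      influenceAt G w (S ∩ P x) v = 1 - notActivated G w (S ∩ P x) v := fun x hx =>
    if_neg fun hvx => ne_of_mem_erase hx (hP.eq (not_disjoint_iff.2 ⟨v, (mem_inter.1 hvx).2, hv⟩))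
  rw [← add_sum_erase _ _ (mem_univ x₀), sum_congr rfl hother]
  by_cases hvS : v ∈ S
  · have hrest : 0 ≤ ∑ x ∈ univ.erase x₀, (1 - notActivated G w (S ∩ P x) v) :=
      sum_nonneg fun x _ => sub_nonneg.2 (notActivated_le_one hw0 hw1 _ _)
    simp only [influenceAt, hvS, mem_inter.2 ⟨hvS, hv⟩, if_true]
    rw [abs_le]; constructor <;> linarith
  · have hvS' : v ∉ S ∩ P x₀ := fun h => hvS (mem_inter.1 h).1
    simp only [influenceAt, hvS, hvS', if_false]
    rw [notActivated_eq_prod_inter hP hS,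
      add_sum_erase _ (fun x => 1 - notActivated G w (S ∩ P x) v) (mem_univ x₀)]
    exact abs_one_sub_prod_sub_sum_le (mem_univ x₀) (fun x _ => notActivated_nonneg hw1 _ _)
      fun x _ => notActivated_le_one hw0 hw1 _ _

theorem sum_erase_one_sub_notActivated_le [DecidableEq ι] (hP : Pairwise (Disjoint on P))
    (hw0 : ∀ u v, 0 ≤ w u v) (hw1 : ∀ u v, w u v ≤ 1) {V S : Finset α} (hS : S ⊆ V) {v : α}
    {x₀ : ι} (hv : v ∈ P x₀) :
    ∑ x ∈ univ.erase x₀, (1 - notActivated G w (S ∩ P x) v)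
      ≤ ∑ u ∈ V.filter (fun u => (¬ ∃ x, u ∈ P x ∧ v ∈ P x) ∧ G.Adj u v), w u v := by
  have hunion : ((univ.erase x₀).biUnion fun x => (S ∩ P x).filter (G.Adj · v))
      ⊆ V.filter (fun u => (¬ ∃ x, u ∈ P x ∧ v ∈ P x) ∧ G.Adj u v) := by
    intro u hu
    simp only [mem_biUnion, mem_erase, mem_filter, mem_inter] at hu
    obtain ⟨x, ⟨hx, -⟩, ⟨huS, hux⟩, hadj⟩ := hu
    refine mem_filter.2 ⟨hS huS, ?_, hadj⟩
    rintro ⟨y, huy, hvy⟩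
    have hxy : x = y := hP.eq (not_disjoint_iff.2 ⟨u, hux, huy⟩)
    exact hx (hxy ▸ hP.eq (not_disjoint_iff.2 ⟨v, hvy, hv⟩))
  calc ∑ x ∈ univ.erase x₀, (1 - notActivated G w (S ∩ P x) v)
      ≤ ∑ x ∈ univ.erase x₀, ∑ u ∈ (S ∩ P x).filter (G.Adj · v), w u v :=
        sum_le_sum fun x _ =>
          one_sub_prod_one_sub_le_sum (fun u _ => hw0 u v) fun u _ => hw1 u v
    _ = ∑ u ∈ (univ.erase x₀).biUnion (fun x => (S ∩ P x).filter (G.Adj · v)), w u v := by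
        refine (sum_biUnion fun x _ y _ hxy => ?_).symm
        exact disjoint_filter_filter ((hP hxy).mono inter_subset_right inter_subset_right)
    _ ≤ _ := sum_le_sum_of_subset_of_nonneg hunion fun u _ _ => hw0 u v

theorem card_filter_crossPairs_eq_sum (V : Finset α) (P : ι → Finset α) (R : α → α → Prop) :
    #((crossPairs V P).filter fun e => R e.1 e.2)
      = ∑ v ∈ V, #(V.filter fun u => (¬ ∃ x, u ∈ P x ∧ v ∈ P x) ∧ R u v) := by
  rw [crossPairs, filter_filter, card_filter, sum_product_right]
  exact sum_congr rfl fun v _ => (card_filter _ _).symm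

theorem abs_oneRoundInfluence_sub_sum_le (hP : Pairwise (Disjoint on P)) {V : Finset α}
    (hcover : univ.biUnion P = V) (hw0 : ∀ u v, 0 ≤ w u v) (hw1 : ∀ u v, w u v ≤ 1)
    {p_m : ℝ} (hpm : ∀ u v, w u v ≤ p_m) {S : Finset α} (hS : S ⊆ V) :
    |oneRoundInfluence G w V S - ∑ x, oneRoundInfluence G w V (S ∩ P x)|
      ≤ p_m * #((crossPairs V P).filter fun e => G.Adj e.1 e.2) := by
  have hSx : ∀ x, S ∩ P x ⊆ V := fun x => inter_subset_left.trans hS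
  rw [oneRoundInfluence_eq_sum_influenceAt hS,
    sum_congr rfl fun x _ => oneRoundInfluence_eq_sum_influenceAt (hSx x), sum_comm,
    ← sum_sub_distrib, card_filter_crossPairs_eq_sum, Nat.cast_sum, mul_sum]
  refine (abs_sum_le_sum_abs _ _).trans (sum_le_sum fun v hv => ?_)
  obtain ⟨x₀, -, hx₀⟩ := mem_biUnion.1 (hcover ▸ hv)
  calc |influenceAt G w S v - ∑ x, influenceAt G w (S ∩ P x) v|
      ≤ ∑ u ∈ V.filter (fun u => (¬ ∃ x, u ∈ P x ∧ v ∈ P x) ∧ G.Adj u v), w u v :=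
        (abs_influenceAt_sub_sum_le hP hw0 hw1 (hcover ▸ hS) hx₀).trans
          (sum_erase_one_sub_notActivated_le hP hw0 hw1 hS hx₀)
    _ ≤ _ := by
        rw [← nsmul_eq_mul', ← sum_const]
        exact sum_le_sum fun u _ => hpm u v

theorem card_crossPairs (hP : Pairwise (Disjoint on P)) {V : Finset α}
    (hcover : univ.biUnion P = V) :
    (#(crossPairs V P) : ℝ) = (#V : ℝ) ^ 2 - ∑ x, (#(P x) : ℝ) ^ 2 := by
  have hdiag : (V ×ˢ V).filter (fun e => ∃ x, e.1 ∈ P x ∧ e.2 ∈ P x)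
      = univ.biUnion fun x => P x ×ˢ P x := by
    ext e
    simp only [mem_filter, mem_product, mem_biUnion, mem_univ, true_and, ← hcover]
    exact ⟨fun h => h.2, fun ⟨x, hx⟩ => ⟨⟨⟨x, hx.1⟩, ⟨x, hx.2⟩⟩, x, hx⟩⟩
  have hcard := card_filter_add_card_filter_not (s := V ×ˢ V)
    (fun e => ∃ x, e.1 ∈ P x ∧ e.2 ∈ P x)
  rw [hdiag, card_biUnion fun x _ y _ hxy => disjoint_product.2 (Or.inl (hP hxy)),
    card_product] at hcard
  simp only [card_product, ← pow_two] at hcard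
  rw [crossPairs, eq_sub_iff_add_eq']
  exact_mod_cast hcard

end Influence

theorem sq_sum_sub_sum_sq_le {ι : Type*} [Fintype ι] (c : ι → ℝ) :
    (∑ i, c i) ^ 2 - ∑ i, c i ^ 2 ≤ (∑ i, c i) ^ 2 * (1 - 1 / Fintype.card ι) := by
  have h : (∑ i, c i) ^ 2 / Fintype.card ι ≤ ∑ i, c i ^ 2 :=
    div_le_of_le_mul₀ (Nat.cast_nonneg _) (sum_nonneg fun i _ => sq_nonneg _)
      (by simpa [mul_comm] using sq_sum_le_card_mul_sum_sq (s := univ) (f := c))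
  rw [mul_one_sub, mul_one_div]
  linarith

section Expectation

variable {Ω β : Type*}

theorem card_filter_mem_eq_sum_indicator (s : Finset β) (E : β → Set Ω) (ω : Ω) :
    (#(s.filter (ω ∈ E ·)) : ℝ) = ∑ b ∈ s, (E b).indicator 1 ω := by
  simp only [natCast_card_filter, Set.indicator_apply, Pi.one_apply]

variable [MeasurableSpace Ω] {μ : Measure Ω}

theorem integrable_card_filter_mem [IsFiniteMeasure μ] (s : Finset β) {E : β → Set Ω}
    (hE : ∀ b, MeasurableSet (E b)) : Integrable (fun ω => (#(s.filter (ω ∈ E ·)) : ℝ)) μ := by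
  simp only [card_filter_mem_eq_sum_indicator]
  exact integrable_finsetSum s fun b _ => (integrable_const 1).indicator (hE b)

theorem integral_card_filter_mem [IsFiniteMeasure μ] (s : Finset β) {E : β → Set Ω}
    (hE : ∀ b, MeasurableSet (E b)) :
    ∫ ω, (#(s.filter (ω ∈ E ·)) : ℝ) ∂μ = ∑ b ∈ s, μ.real (E b) := by
  simp only [card_filter_mem_eq_sum_indicator]
  rw [integral_finsetSum s fun b _ => (integrable_const 1).indicator (hE b)]
  exact sum_congr rfl fun b _ => integral_indicator_one (hE b)

end Expectation

theorem integral_card_filter_adj_crossPairs {α ι Ω : Type*} [DecidableEq α] [Fintype ι]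
    [MeasurableSpace Ω] {μ : Measure Ω} [IsFiniteMeasure μ] {V : Finset α} {P : ι → Finset α}
    (hcover : univ.biUnion P = V) {G : Ω → SimpleGraph α}
    (hmeas : ∀ u v : α, MeasurableSet {ω | (G ω).Adj u v}) {q : ℝ} (hq0 : 0 ≤ q)
    (hcross : ∀ u v : α, u ∈ V → v ∈ V → u ≠ v → (¬ ∃ x, u ∈ P x ∧ v ∈ P x) →
      μ {ω | (G ω).Adj u v} = ENNReal.ofReal q) :
    ∫ ω, (#((crossPairs V P).filter fun e => (G ω).Adj e.1 e.2) : ℝ) ∂μ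
      = q * #(crossPairs V P) := by
  refine (integral_card_filter_mem (E := fun e : α × α => {ω | (G ω).Adj e.1 e.2}) _
    fun e => hmeas e.1 e.2).trans ?_
  rw [← nsmul_eq_mul', ← sum_const]
  refine sum_congr rfl fun e he => ?_
  obtain ⟨huv, hcr⟩ := mem_filter.1 he
  obtain ⟨hu, hv⟩ := mem_product.1 huv
  have hne : e.1 ≠ e.2 := fun h => by
    obtain ⟨x, -, hx⟩ := mem_biUnion.1 (hcover ▸ hu)
    exact hcr ⟨x, hx, h ▸ hx⟩
  rw [measureReal_def, hcross _ _ hu hv hne hcr, ENNReal.toReal_ofReal hq0]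

theorem sbm_factorization_loss_general {α Ω : Type*} [DecidableEq α] [MeasurableSpace Ω]
    (μ : Measure Ω) [IsProbabilityMeasure μ]
    (V : Finset α) (n ℓ : ℕ) (hn : V.card = n)
    (P : Fin ℓ → Finset α)
    (hdisj : ∀ x y : Fin ℓ, x ≠ y → Disjoint (P x) (P y))
    (hcover : Finset.univ.biUnion P = V)
    (q : ℝ) (hq0 : 0 ≤ q)
    (G : Ω → SimpleGraph α)
    (hmeas : ∀ u v : α, MeasurableSet {ω | (G ω).Adj u v})
    (hcross : ∀ u v : α, u ∈ V → v ∈ V → u ≠ v →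
      (¬ ∃ x : Fin ℓ, u ∈ P x ∧ v ∈ P x) →
      μ {ω | (G ω).Adj u v} = ENNReal.ofReal q)
    (w : α → α → ℝ)
    (hw0 : ∀ u v, 0 ≤ w u v) (hw1 : ∀ u v, w u v ≤ 1)
    (p_m : ℝ) (hpm : ∀ u v, w u v ≤ p_m) (hpm0 : 0 ≤ p_m) :
    ∫ ω, (V.powerset.sup' (Finset.powerset_nonempty V)
        (fun S => |oneRoundInfluence (G ω) w V S
            - ∑ x : Fin ℓ, oneRoundInfluence (G ω) w V (S ∩ P x)|)) ∂μ
      ≤ q * (n : ℝ) ^ 2 * (1 - 1 / (ℓ : ℝ)) * p_m := by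
  have hP : Pairwise (Disjoint on P) := fun x y => hdisj x y
  have hparts : ∑ x, (#(P x) : ℝ) = n := by
    rw [← hn, ← hcover, card_biUnion fun x _ y _ hxy => hP hxy, Nat.cast_sum]
  have hintegrable : Integrable
      (fun ω => p_m * #((crossPairs V P).filter fun e => (G ω).Adj e.1 e.2)) μ :=
    (integrable_card_filter_mem (E := fun e : α × α => {ω | (G ω).Adj e.1 e.2}) _
      fun e => hmeas e.1 e.2).const_mul p_m
  calc _ ≤ ∫ ω, p_m * #((crossPairs V P).filter fun e => (G ω).Adj e.1 e.2) ∂μ :=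
        integral_mono_of_nonneg
          (ae_of_all _ fun ω => (le_sup'_iff _).2 ⟨V, mem_powerset_self V, abs_nonneg _⟩)
          hintegrable
          (ae_of_all _ fun ω => sup'_le _ _ fun S hS =>
            abs_oneRoundInfluence_sub_sum_le hP hcover hw0 hw1 hpm (mem_powerset.1 hS))
    _ = p_m * (q * ((n : ℝ) ^ 2 - ∑ x, (#(P x) : ℝ) ^ 2)) := by
        rw [integral_const_mul, integral_card_filter_adj_crossPairs hcover hmeas hq0 hcross,
          card_crossPairs hP hcover, hn]
    _ ≤ p_m * (q * ((n : ℝ) ^ 2 * (1 - 1 / (ℓ : ℝ)))) := by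
        gcongr
        simpa only [hparts, Fintype.card_fin] using sq_sum_sub_sum_sq_le fun x => (#(P x) : ℝ)
    _ = q * (n : ℝ) ^ 2 * (1 - 1 / (ℓ : ℝ)) * p_m := by ring

/-- Let `V` with `|V| = n` be partitioned into `ℓ ≥ 1` parts, let
`p, q ∈ [0,1]`, and let `G : Ω → SimpleGraph α` be a random graph whose edges are
drawn from the stochastic block model on this partition: each pair of distinct
vertices in the same part is an edge with probability `p`, each cross pair with
probability `q`.  If `w u v ∈ [0,1]` are symmetric propagation probabilities
bounded by `p_m`, then
`E_G[ max_{S ⊆ V} |I_G(S) − Σₓ I_G(S ∩ Pₓ)| ] ≤ q · n² · (1 − 1/ℓ) · p_m`. -/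
theorem sbm_factorization_loss {α Ω : Type*} [DecidableEq α] [MeasurableSpace Ω]
    (μ : Measure Ω) [IsProbabilityMeasure μ]
    (V : Finset α) (n ℓ : ℕ) (hn : V.card = n) (hℓ : 1 ≤ ℓ)
    (P : Fin ℓ → Finset α)
    (hdisj : ∀ x y : Fin ℓ, x ≠ y → Disjoint (P x) (P y))
    (hcover : Finset.univ.biUnion P = V)
    (p q : ℝ) (hp0 : 0 ≤ p) (hp1 : p ≤ 1) (hq0 : 0 ≤ q) (hq1 : q ≤ 1)
    (G : Ω → SimpleGraph α)
    (hmeas : ∀ u v : α, MeasurableSet {ω | (G ω).Adj u v})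
    (hsame : ∀ u v : α, u ∈ V → v ∈ V → u ≠ v →
      (∃ x : Fin ℓ, u ∈ P x ∧ v ∈ P x) →
      μ {ω | (G ω).Adj u v} = ENNReal.ofReal p)
    (hcross : ∀ u v : α, u ∈ V → v ∈ V → u ≠ v →
      (¬ ∃ x : Fin ℓ, u ∈ P x ∧ v ∈ P x) →
      μ {ω | (G ω).Adj u v} = ENNReal.ofReal q)
    (w : α → α → ℝ) (hsymm : ∀ u v, w u v = w v u)
    (hw0 : ∀ u v, 0 ≤ w u v) (hw1 : ∀ u v, w u v ≤ 1)
    (p_m : ℝ) (hpm : ∀ u v, w u v ≤ p_m) (hpm0 : 0 ≤ p_m) (hpm1 : p_m ≤ 1) :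
    ∫ ω, (V.powerset.sup' (Finset.powerset_nonempty V)
        (fun S => |oneRoundInfluence (G ω) w V S
            - ∑ x : Fin ℓ, oneRoundInfluence (G ω) w V (S ∩ P x)|)) ∂μ
      ≤ q * (n : ℝ) ^ 2 * (1 - 1 / (ℓ : ℝ)) * p_m :=
  sbm_factorization_loss_general μ V n ℓ hn P hdisj hcover q hq0 G hmeas hcross w hw0 hw1 p_m hpm
    hpm0
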